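/- Let V be a finite-dimensional irreducible sp(2n)-module, restricted to the subalgebra sp(2n-2) preserving coordinates ±2,...,±n, and let Z ⊂ Sp(2n) be the subgroup of upper unitriangular symplectic matrices with Z_{Sp(2n-2)} its intersection with Sp(2n-2). In the Zhelobenko realization of V as functions f on Z, a vector v ∈ V is an sp(2n-2)-highest vector if and only if the corresponding function f is invariant under right translation by Z_{Sp(2n-2)}, and this holds if and only if f depends only on the variables z_{-n,-1},...,z_{-2,-1}, z_{-n,1},...,z_{-1,1}. -/

import Mathlib

open Matrix

abbrev Idx (n : ℕ) := Fin n ⊕ Fin n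

def negIdx {n : ℕ} : Idx n → Idx n := Sum.swap

def sgn {n : ℕ} : Idx n → ℂ := Sum.elim (fun _ => -1) (fun _ => 1)

/-- `Sum.inl a ↦ -(a+1)`, `Sum.inr a ↦ a+1`. -/
def idxVal {n : ℕ} : Idx n → ℤ :=
  Sum.elim (fun a => -(a.1 + 1 : ℤ)) (fun a => (a.1 + 1 : ℤ))

def symJ (n : ℕ) : Matrix (Idx n) (Idx n) ℂ :=
  fun i j => match i, j with
  | Sum.inl a, Sum.inr b => if a = b then 1 else 0
  | Sum.inr a, Sum.inl b => if a = b then -1 else 0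
  | _, _ => 0

def Emat {n : ℕ} (i j : Idx n) : Matrix (Idx n) (Idx n) ℂ :=
  Matrix.single i j 1

/-- `F_{i,j} = E_{i,j} - sign(i) sign(j) E_{-j,-i}` spanning `sp(2n)`. -/
def Fmat {n : ℕ} (i j : Idx n) : Matrix (Idx n) (Idx n) ℂ :=
  Emat i j - (sgn i * sgn j) • Emat (negIdx j) (negIdx i)

/-- The subgroup `Z` of upper unitriangular symplectic matrices (with respect to the
order `-n < ⋯ < -1 < 1 < ⋯ < n`). -/
def Zset (n : ℕ) : Set (Matrix (Idx n) (Idx n) ℂ) :=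
  {z | zᵀ * symJ n * z = symJ n ∧
    ∀ i j : Idx n, idxVal j ≤ idxVal i → z i j = if i = j then 1 else 0}

/-- The subgroup `Z_{Sp(2n-2)}` : elements of `Z` lying in the subgroup `Sp(2n-2)`
preserving the coordinates `±2,...,±n` (and fixing the coordinates `±1`). -/
def ZSpset (n : ℕ) : Set (Matrix (Idx n) (Idx n) ℂ) :=
  {u | u ∈ Zset n ∧
    ∀ i j : Idx n, (idxVal i).natAbs = 1 ∨ (idxVal j).natAbs = 1 →
      u i j = if i = j then 1 else 0}

/-!
Right translation by `Z_{Sp(2n-2)}` is generated by the one-parameter subgroups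
`exp (s F_{i,j}) = 1 + s F_{i,j}` (since `F_{i,j}² = 0`) of the positive roots of `sp(2n-2)`:
any `u ∈ Z_{Sp(2n-2)}` is reduced to `1` by right multiplications by such elements, clearing
the rows `-n, …, -2` one after the other from left to right; the rows `±1` are already trivial
and the positive rows follow by symplecticity. This gives the first equivalence. For the
second, `z` and `w` in `Z` have the same columns `±1` exactly when `z⁻¹ w ∈ Z_{Sp(2n-2)}`,
and the listed variables are the entries of those columns that unitriangularity leaves free.
-/

section Indices

variable {n : ℕ}

@[simp] lemma idxVal_inl (a : Fin n) : idxVal (Sum.inl a : Idx n) = -(a.1 + 1 : ℤ) := rfl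

@[simp] lemma idxVal_inr (a : Fin n) : idxVal (Sum.inr a : Idx n) = a.1 + 1 := rfl

@[simp] lemma negIdx_inl (a : Fin n) : negIdx (Sum.inl a : Idx n) = Sum.inr a := rfl

@[simp] lemma negIdx_inr (a : Fin n) : negIdx (Sum.inr a : Idx n) = Sum.inl a := rfl

lemma idxVal_injective : Function.Injective (idxVal (n := n)) := by
  rintro (a | a) (b | b) h <;> simp at h
  · exact congrArg Sum.inl (Fin.ext (by omega))
  · omega
  · omega
  · exact congrArg Sum.inr (Fin.ext (by omega))

lemma idxVal_ne_zero (i : Idx n) : idxVal i ≠ 0 := by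
  cases i <;> simp <;> omega

@[simp] lemma negIdx_negIdx (i : Idx n) : negIdx (negIdx i) = i := by cases i <;> rfl

lemma negIdx_injective : Function.Injective (negIdx (n := n)) :=
  Function.LeftInverse.injective negIdx_negIdx

lemma eq_negIdx_comm {i j : Idx n} : i = negIdx j ↔ j = negIdx i := by
  constructor <;> (rintro rfl; rw [negIdx_negIdx])

lemma negIdx_eq_iff {i j : Idx n} : negIdx i = j ↔ i = negIdx j := by
  rw [eq_comm, eq_negIdx_comm]

@[simp] lemma idxVal_negIdx (i : Idx n) : idxVal (negIdx i) = -idxVal i := by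
  cases i <;> simp

lemma ne_negIdx (i : Idx n) : i ≠ negIdx i := by cases i <;> simp

@[simp] lemma sgn_negIdx (i : Idx n) : sgn (negIdx i) = -sgn i := by
  cases i <;> simp [sgn]

@[simp] lemma sgn_mul_self (i : Idx n) : sgn i * sgn i = 1 := by
  cases i <;> simp [sgn]

lemma symJ_apply (i j : Idx n) : symJ n i j = if j = negIdx i then sgn j else 0 := by
  rcases i with a | a <;> rcases j with b | b <;> simp [symJ, sgn, eq_comm]

lemma Fmat_apply (i j x y : Idx n) :
    Fmat i j x y = (if x = i ∧ y = j then 1 else 0)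
      - sgn i * sgn j * (if x = negIdx j ∧ y = negIdx i then 1 else 0) := by
  simp [Fmat, Emat, Matrix.single, eq_comm]

end Indices

section Symplectic

variable {n : ℕ} {z : Matrix (Idx n) (Idx n) ℂ}

lemma transpose_mul_symJ_mul_apply (hz : zᵀ * symJ n * z = symJ n) (a b : Idx n) :
    ∑ l, z (negIdx l) a * (sgn l * z l b) = symJ n a b := by
  rw [← congrFun (congrFun hz a) b]
  simp only [mul_apply, transpose_apply, symJ_apply, Finset.sum_mul]
  refine Finset.sum_congr rfl fun l _ => ?_
  rw [Finset.sum_eq_single (negIdx l)]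
  · simp only [negIdx_negIdx, if_true]; ring
  · intro k _ hk
    rw [if_neg (fun e => hk (eq_negIdx_comm.mp e)), mul_zero, zero_mul]
  · simp

/-- The inverse of a matrix preserving `symJ n`, read off from `z⁻¹ = -J zᵀ J`. -/
def sympInv (z : Matrix (Idx n) (Idx n) ℂ) : Matrix (Idx n) (Idx n) ℂ :=
  fun i j => sgn i * sgn j * z (negIdx j) (negIdx i)

lemma sympInv_mul (hz : zᵀ * symJ n * z = symJ n) : sympInv z * z = 1 := by
  ext i j
  have hsum : ∀ k, sympInv z i k * z k j = sgn i * (z (negIdx k) (negIdx i) * (sgn k * z k j)) :=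
    fun k => by simp only [sympInv]; ring
  rw [mul_apply, Finset.sum_congr rfl fun k _ => hsum k, ← Finset.mul_sum,
    transpose_mul_symJ_mul_apply hz, symJ_apply, negIdx_negIdx, one_apply]
  rcases eq_or_ne j i with rfl | hne
  · simp
  · simp [hne, Ne.symm hne]

lemma mul_sympInv (hz : zᵀ * symJ n * z = symJ n) : z * sympInv z = 1 :=
  mul_eq_one_comm.mp (sympInv_mul hz)

lemma col_negIdx_eq_of_row_eq (hz : zᵀ * symJ n * z = symJ n) {i : Idx n}
    (h : ∀ k, z i k = if i = k then 1 else 0) (b : Idx n) :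
    z b (negIdx i) = if b = negIdx i then 1 else 0 := by
  have hone := congrFun (congrFun (mul_sympInv hz) b) (negIdx i)
  rw [mul_apply, Finset.sum_eq_single (negIdx i)] at hone
  · simpa [sympInv, h, one_apply] using hone
  · intro k _ hk
    simp only [sympInv, negIdx_negIdx, h, if_neg (fun e => hk (eq_negIdx_comm.mp e)), mul_zero]
  · simp

lemma row_negIdx_eq_of_col_eq (hz : zᵀ * symJ n * z = symJ n) {c : Idx n}
    (h : ∀ k, z k c = if k = c then 1 else 0) (b : Idx n) :
    z (negIdx c) b = if negIdx c = b then 1 else 0 := by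
  have hone := congrFun (congrFun (sympInv_mul hz) (negIdx c)) b
  rw [mul_apply, Finset.sum_eq_single (negIdx c)] at hone
  · simpa [sympInv, h, one_apply] using hone
  · intro k _ hk
    have hkc : negIdx k ≠ c := fun e => hk (eq_negIdx_comm.mp e.symm)
    simp only [sympInv, negIdx_negIdx, h, if_neg hkc, mul_zero, zero_mul]
  · simp

end Symplectic

namespace Zset

variable {n : ℕ} {z w : Matrix (Idx n) (Idx n) ℂ}

lemma apply_self (hz : z ∈ Zset n) (i : Idx n) : z i i = 1 := by
  simpa using hz.2 i i le_rfl

lemma apply_of_lt (hz : z ∈ Zset n) {i j : Idx n} (h : idxVal j < idxVal i) : z i j = 0 := by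
  rw [hz.2 i j h.le, if_neg (by rintro rfl; exact lt_irrefl _ h)]

lemma mul_mem (hz : z ∈ Zset n) (hw : w ∈ Zset n) : z * w ∈ Zset n := by
  refine ⟨?_, fun i j hij => ?_⟩
  · rw [transpose_mul, show wᵀ * zᵀ * symJ n * (z * w) = wᵀ * (zᵀ * symJ n * z) * w by
      simp only [Matrix.mul_assoc], hz.1, hw.1]
  · rw [mul_apply, Finset.sum_eq_single i, apply_self hz, one_mul, hw.2 i j hij]
    · intro k _ hki
      rcases lt_or_gt_of_ne (fun e => hki (idxVal_injective e)) with h | h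
      · rw [apply_of_lt hz h, zero_mul]
      · rw [apply_of_lt hw (hij.trans_lt h), mul_zero]
    · simp

lemma sympInv_mem (hz : z ∈ Zset n) : sympInv z ∈ Zset n := by
  refine ⟨?_, fun i j hij => ?_⟩
  · calc (sympInv z)ᵀ * symJ n * sympInv z
        = (sympInv z)ᵀ * (zᵀ * symJ n * z) * sympInv z := by rw [hz.1]
      _ = (z * sympInv z)ᵀ * symJ n * (z * sympInv z) := by
        rw [transpose_mul]; simp only [Matrix.mul_assoc]
      _ = symJ n := by rw [mul_sympInv hz.1]; simp
  · simp only [sympInv]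
    rw [hz.2 _ _ (by simpa using hij)]
    rcases eq_or_ne i j with rfl | hne
    · simp
    · rw [if_neg (fun e => hne (negIdx_injective e).symm), if_neg hne, mul_zero]

lemma col_eq_of_apply_lt_eq (hz : z ∈ Zset n) (hw : w ∈ Zset n) {c : Idx n}
    (h : ∀ x, idxVal x < idxVal c → z x c = w x c) (x : Idx n) : z x c = w x c := by
  rcases lt_or_ge (idxVal x) (idxVal c) with hx | hx
  · exact h x hx
  · rw [hz.2 x c hx, hw.2 x c hx]

lemma exists_ZSpset_mul_eq (hz : z ∈ Zset n) (hw : w ∈ Zset n)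
    (h : ∀ c, (idxVal c).natAbs = 1 → ∀ x, z x c = w x c) :
    ∃ u ∈ ZSpset n, w = z * u := by
  have hu : sympInv z * w ∈ Zset n := mul_mem (sympInv_mem hz) hw
  have hcol : ∀ c, (idxVal c).natAbs = 1 → ∀ x,
      (sympInv z * w) x c = if x = c then 1 else 0 := by
    intro c hc x
    simp only [mul_apply, ← h c hc]
    rw [← mul_apply, sympInv_mul hz.1, one_apply]
  refine ⟨sympInv z * w, ⟨hu, fun i j hij => ?_⟩, ?_⟩
  · rcases hij with hi | hj
    · have hc : (idxVal (negIdx i)).natAbs = 1 := by simpa using hi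
      simpa using row_negIdx_eq_of_col_eq hu.1 (hcol _ hc) j
    · exact hcol j hj i
  · rw [← Matrix.mul_assoc, mul_sympInv hz.1, Matrix.one_mul]

end Zset

namespace ZSpset

variable {n : ℕ} {u v z : Matrix (Idx n) (Idx n) ℂ}

lemma one_mem : (1 : Matrix (Idx n) (Idx n) ℂ) ∈ ZSpset n :=
  ⟨⟨by simp, fun _ _ _ => Matrix.one_apply⟩, fun _ _ _ => Matrix.one_apply⟩

lemma mul_apply_col (hu : u ∈ ZSpset n) {c : Idx n} (hc : (idxVal c).natAbs = 1) (x : Idx n) :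
    (z * u) x c = z x c := by
  rw [mul_apply, Finset.sum_eq_single c, Zset.apply_self hu.1, mul_one]
  · intro k _ hk
    rw [hu.2 k c (Or.inr hc), if_neg hk, mul_zero]
  · simp

lemma mul_mem (hu : u ∈ ZSpset n) (hv : v ∈ ZSpset n) : u * v ∈ ZSpset n := by
  refine ⟨Zset.mul_mem hu.1 hv.1, fun x y hxy => ?_⟩
  rcases hxy with hx | hy
  · rw [mul_apply, Finset.sum_eq_single x, hu.2 x x (Or.inl hx), if_pos rfl, one_mul,
      hv.2 x y (Or.inl hx)]
    · intro k _ hk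
      rw [hu.2 x k (Or.inl hx), if_neg (Ne.symm hk), zero_mul]
    · simp
  · rw [mul_apply_col hv hy, hu.2 x y (Or.inr hy)]

end ZSpset

section RootElements

variable {n : ℕ}

/-- `F_{i,j}` is a positive root vector of `sp(2n-2)`. -/
def IsSubPosRoot (i j : Idx n) : Prop :=
  idxVal i < idxVal j ∧ 2 ≤ (idxVal i).natAbs ∧ 2 ≤ (idxVal j).natAbs

noncomputable def rootElem (i j : Idx n) (s : ℂ) : Matrix (Idx n) (Idx n) ℂ :=
  1 + s • Fmat i j

lemma Fmat_mul_self {i j : Idx n} (hij : i ≠ j) : Fmat i j * Fmat i j = 0 := by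
  have h1 : j ≠ negIdx j := ne_negIdx j
  have h2 : negIdx i ≠ i := (ne_negIdx i).symm
  have h3 : negIdx i ≠ negIdx j := fun e => hij (negIdx_injective e)
  simp only [Fmat, Emat, sub_mul, mul_sub, Matrix.smul_mul, Matrix.mul_smul,
    single_mul_single_of_ne _ _ _ _ hij.symm, single_mul_single_of_ne _ _ _ _ h1,
    single_mul_single_of_ne _ _ _ _ h2, single_mul_single_of_ne _ _ _ _ h3, smul_zero, sub_zero]

lemma sgn_mul_Fmat_negIdx_apply (i j a b : Idx n) :
    sgn a * Fmat i j (negIdx a) b = -sgn i * ((if a = negIdx i ∧ b = j then 1 else 0)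
      + (if a = j ∧ b = negIdx i then 1 else 0)) := by
  simp only [Fmat_apply, negIdx_eq_iff, negIdx_injective.eq_iff]
  split_ifs with h1 h2 h2
  · obtain ⟨rfl, rfl⟩ := h1
    obtain ⟨rfl, -⟩ := h2
    rw [sgn_negIdx]
    linear_combination (-sgn i) * sgn_mul_self i
  · obtain ⟨rfl, rfl⟩ := h1
    simp
  · obtain ⟨rfl, rfl⟩ := h2
    linear_combination (-sgn i) * sgn_mul_self a
  · simp

lemma sgn_mul_Fmat_negIdx_apply_comm (i j a b : Idx n) :
    sgn b * Fmat i j (negIdx b) a = sgn a * Fmat i j (negIdx a) b := by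
  rw [sgn_mul_Fmat_negIdx_apply, sgn_mul_Fmat_negIdx_apply, add_comm]
  simp only [and_comm]

lemma Fmat_transpose_mul_symJ (i j : Idx n) :
    (Fmat i j)ᵀ * symJ n = -(symJ n * Fmat i j) := by
  ext a b
  have hl : ∑ k, Fmat i j k a * symJ n k b = sgn b * Fmat i j (negIdx b) a := by
    rw [Finset.sum_eq_single (negIdx b)]
    · simp [symJ_apply, mul_comm]
    · intro k _ hk
      rw [symJ_apply, if_neg (fun e => hk (eq_negIdx_comm.mp e)), mul_zero]
    · simp
  have hr : ∑ k, symJ n a k * Fmat i j k b = -(sgn a * Fmat i j (negIdx a) b) := by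
    rw [Finset.sum_eq_single (negIdx a)]
    · simp [symJ_apply]
    · intro k _ hk
      rw [symJ_apply, if_neg hk, zero_mul]
    · simp
  simp only [mul_apply, transpose_apply, Matrix.neg_apply, hl, hr, neg_neg]
  exact sgn_mul_Fmat_negIdx_apply_comm i j a b

lemma rootElem_symplectic {i j : Idx n} (hij : i ≠ j) (s : ℂ) :
    (rootElem i j s)ᵀ * symJ n * rootElem i j s = symJ n := by
  have hsq : symJ n * Fmat i j * Fmat i j = 0 := by
    rw [Matrix.mul_assoc, Fmat_mul_self hij, Matrix.mul_zero]
  simp only [rootElem, transpose_add, transpose_smul, transpose_one, add_mul, mul_add, one_mul,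
    mul_one, Matrix.smul_mul, Matrix.mul_smul, Fmat_transpose_mul_symJ,
    Matrix.neg_mul, hsq, smul_neg, smul_zero, neg_zero, add_zero]
  abel

lemma Fmat_apply_eq_zero {i j x y : Idx n} (h1 : ¬(x = i ∧ y = j))
    (h2 : ¬(x = negIdx j ∧ y = negIdx i)) : Fmat i j x y = 0 := by
  rw [Fmat_apply, if_neg h1, if_neg h2]; ring

lemma rootElem_mem_ZSpset {i j : Idx n} (h : IsSubPosRoot i j) (s : ℂ) :
    rootElem i j s ∈ ZSpset n := by
  obtain ⟨hij, hi, hj⟩ := h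
  have hF : ∀ x y, idxVal y ≤ idxVal x ∨ (idxVal x).natAbs = 1 ∨ (idxVal y).natAbs = 1 →
      rootElem i j s x y = if x = y then 1 else 0 := by
    intro x y hxy
    rw [rootElem, Matrix.add_apply, Matrix.smul_apply, Fmat_apply_eq_zero, smul_zero, add_zero,
      one_apply]
    · rintro ⟨rfl, rfl⟩; omega
    · rintro ⟨rfl, rfl⟩; simp at hxy; omega
  exact ⟨⟨rootElem_symplectic (fun e => by simp [e] at hij) s,
    fun x y h => hF x y (Or.inl h)⟩, fun x y h => hF x y (Or.inr h)⟩

lemma rootElem_mul_rootElem_neg {i j : Idx n} (hij : i ≠ j) (s : ℂ) :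
    rootElem i j s * rootElem i j (-s) = 1 := by
  simp only [rootElem, add_mul, mul_add, one_mul, mul_one, Matrix.smul_mul, Matrix.mul_smul,
    Fmat_mul_self hij, smul_zero, add_zero]
  rw [neg_smul]
  abel

lemma exp_smul_Fmat {i j : Idx n} (hij : i ≠ j) (s : ℂ) :
    NormedSpace.exp (s • Fmat i j) = rootElem i j s := by
  have hsq : (s • Fmat i j) ^ 2 = 0 := by
    rw [pow_two, Matrix.smul_mul, Matrix.mul_smul, Fmat_mul_self hij, smul_zero, smul_zero]
  simp only [NormedSpace.exp_eq_tsum ℂ]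
  rw [tsum_eq_sum (s := Finset.range 2)]
  · simp [Finset.sum_range_succ, rootElem]
  · intro k hk
    rw [show k = 2 + (k - 2) by simp at hk; omega, pow_add, hsq, Matrix.zero_mul, smul_zero]

lemma mul_Emat_apply (u : Matrix (Idx n) (Idx n) ℂ) (a b x y : Idx n) :
    (u * Emat a b) x y = if y = b then u x a else 0 := by
  rcases eq_or_ne y b with rfl | hy
  · simp [Emat]
  · simp [Emat, hy]

lemma mul_rootElem_apply (u : Matrix (Idx n) (Idx n) ℂ) (r j : Idx n) (s : ℂ) (x y : Idx n) :
    (u * rootElem r j s) x y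
      = u x y + s * ((if y = j then u x r else 0)
          - sgn r * sgn j * (if y = negIdx r then u x (negIdx j) else 0)) := by
  simp only [rootElem, Fmat, Matrix.mul_add, Matrix.mul_one, Matrix.mul_smul, Matrix.mul_sub,
    Matrix.add_apply, Matrix.smul_apply, Matrix.sub_apply, smul_eq_mul, mul_Emat_apply]

end RootElements

section Generation

variable {n : ℕ} {u : Matrix (Idx n) (Idx n) ℂ}

def rootSubmonoid (n : ℕ) : Submonoid (Matrix (Idx n) (Idx n) ℂ) :=
  Submonoid.closure {g | ∃ i j : Idx n, IsSubPosRoot i j ∧ ∃ s, rootElem i j s = g}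

lemma rootSubmonoid_subset_ZSpset : ∀ u ∈ rootSubmonoid n, u ∈ ZSpset n := by
  intro u hu
  induction hu using Submonoid.closure_induction with
  | mem g hg =>
    obtain ⟨i, j, hij, s, rfl⟩ := hg
    exact rootElem_mem_ZSpset hij s
  | one => exact ZSpset.one_mem
  | mul a b _ _ ha hb => exact ZSpset.mul_mem ha hb

lemma mem_rootSubmonoid_of_mul_rootElem {i j : Idx n} (h : IsSubPosRoot i j) {s : ℂ}
    (hu : u * rootElem i j s ∈ rootSubmonoid n) : u ∈ rootSubmonoid n := by
  have hij : i ≠ j := fun e => by simp [IsSubPosRoot, e] at h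
  rw [← Matrix.mul_one u, ← rootElem_mul_rootElem_neg hij s, ← Matrix.mul_assoc]
  exact Submonoid.mul_mem _ hu (Submonoid.subset_closure ⟨i, j, h, -s, rfl⟩)

lemma apply_mul_eq_of_mem_rootSubmonoid {f : Matrix (Idx n) (Idx n) ℂ → ℂ}
    (hf : ∀ i j, IsSubPosRoot i j → ∀ s, ∀ z ∈ Zset n, f (z * rootElem i j s) = f z) :
    ∀ u ∈ rootSubmonoid n, ∀ z ∈ Zset n, f (z * u) = f z := by
  intro u hu
  induction hu using Submonoid.closure_induction with
  | mem g hg =>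
    obtain ⟨i, j, hij, s, rfl⟩ := hg
    exact hf i j hij s
  | one => intro z _; rw [Matrix.mul_one]
  | mul a b ha _ iha ihb =>
    intro z hz
    have hza : z * a ∈ Zset n := Zset.mul_mem hz (rootSubmonoid_subset_ZSpset a ha).1
    rw [← Matrix.mul_assoc, ihb _ hza, iha z hz]

/-- The rows `-(m+1), …, -n` are rows of `1`. -/
def IdRowsFrom (u : Matrix (Idx n) (Idx n) ℂ) (m : ℕ) : Prop :=
  ∀ a : Fin n, m ≤ a.1 → ∀ y, u (Sum.inl a) y = if Sum.inl a = y then 1 else 0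

lemma IdRowsFrom.mul_rootElem {m : ℕ} (h : IdRowsFrom u m) {r j : Idx n}
    (hr : -(m : ℤ) ≤ idxVal r) (hj : idxVal j ≤ m) (s : ℂ) :
    IdRowsFrom (u * rootElem r j s) m := by
  intro a ha y
  have har : Sum.inl a ≠ r := fun e => by subst e; simp at hr; omega
  have haj : Sum.inl a ≠ negIdx j := fun e => by
    have := congrArg idxVal e; simp at this; omega
  rw [mul_rootElem_apply, h a ha r, h a ha (negIdx j), if_neg har, if_neg haj, h a ha y]
  simp

/-- The factor `2` comes from `F_{r,-r} = 2 E_{r,-r}`. -/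
lemma row_mul_rootElem_eq_zero {r j : Idx n} (hdiag : u r r = 1)
    (hj : idxVal j ≤ idxVal (negIdx r))
    (hzero : ∀ y, idxVal r < idxVal y → idxVal y < idxVal j → u r y = 0) :
    ∀ y, idxVal r < idxVal y → idxVal y ≤ idxVal j →
      (u * rootElem r j (-(u r j) / (if j = negIdx r then 2 else 1))) r y = 0 := by
  intro y hry hyj
  rw [mul_rootElem_apply]
  rcases hyj.lt_or_eq with hlt | heq
  · have hyr : y ≠ negIdx r := fun e => by subst e; omega
    rw [hzero y hry hlt, if_neg (show y ≠ j from fun e => by subst e; omega), if_neg hyr]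
    ring
  · obtain rfl := idxVal_injective heq
    by_cases hy : y = negIdx r
    · subst hy
      simp [hdiag]
      ring
    · simp [hy, hdiag]

lemma IdRowsFrom.of_row_eq_zero {m : ℕ} (hmn : m < n) (hu : u ∈ Zset n)
    (hrows : IdRowsFrom u (m + 1))
    (hrow : ∀ y, -(m + 1 : ℤ) < idxVal y → idxVal y ≤ m + 1 →
      u (Sum.inl ⟨m, hmn⟩) y = 0) :
    IdRowsFrom u m := by
  intro a ha y
  rcases ha.lt_or_eq with ha | ha
  · exact hrows a ha y
  obtain rfl : a = ⟨m, hmn⟩ := Fin.ext ha.symm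
  rcases le_or_gt (idxVal y) (-(m + 1 : ℤ)) with hy | hy
  · exact hu.2 _ y (by simpa using hy)
  have hne : (Sum.inl ⟨m, hmn⟩ : Idx n) ≠ y := fun e => by subst e; simp at hy
  rw [if_neg hne]
  rcases le_or_gt (idxVal y) (m + 1 : ℤ) with hy' | hy'
  · exact hrow y hy hy'
  obtain ⟨b, rfl⟩ : ∃ b : Fin n, Sum.inr b = y := by
    rcases y with b | b
    · simp at hy'; omega
    · exact ⟨b, rfl⟩
  have hb : m + 1 ≤ b.1 := by simp at hy'; omega
  simpa using col_negIdx_eq_of_row_eq hu.1 (hrows b hb) (Sum.inl ⟨m, hmn⟩)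

lemma Zset.eq_one_of_idRowsFrom_zero (hu : u ∈ Zset n) (h : IdRowsFrom u 0) : u = 1 := by
  ext x y
  rw [one_apply]
  rcases x with a | a
  · exact h a (Nat.zero_le _) y
  rcases y with b | b
  · exact hu.2 _ _ (by simp; omega)
  · simpa using col_negIdx_eq_of_row_eq hu.1 (h b (Nat.zero_le _)) (Sum.inr a)

/-- Row `r = -(m+1)` is cleared from left to right: at stage `t` it vanishes on the columns
`r < y ≤ t`, and the next column `j` is cleared by `rootElem r j s`, which leaves the earlier
columns and the rows above `r` untouched. -/
lemma mem_rootSubmonoid_of_idRowsFrom_succ {m : ℕ} (hm : 1 ≤ m) (hmn : m < n)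
    (ih : ∀ u ∈ ZSpset n, IdRowsFrom u m → u ∈ rootSubmonoid n) :
    ∀ u ∈ ZSpset n, IdRowsFrom u (m + 1) → u ∈ rootSubmonoid n := by
  set r : Idx n := Sum.inl ⟨m, hmn⟩
  have hvr : idxVal r = -(m + 1 : ℤ) := rfl
  suffices h : ∀ t ≤ (m + 1 : ℤ), ∀ u ∈ ZSpset n, IdRowsFrom u (m + 1) →
      (∀ y, idxVal r < idxVal y → idxVal y ≤ t → u r y = 0) → u ∈ rootSubmonoid n by
    intro u hu hrows
    exact h (-(m + 1)) (by omega) u hu hrows fun y h1 h2 => by omega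
  intro t ht
  induction t, ht using Int.leInductionDown with
  | base =>
    intro u hu hrows hrow
    exact ih u hu (hrows.of_row_eq_zero hmn hu.1 hrow)
  | pred t _ iht =>
    intro u hu hrows hrow
    by_cases hj : ∃ j : Idx n, idxVal j = t ∧ idxVal r < idxVal j ∧ 2 ≤ (idxVal j).natAbs
    · obtain ⟨j, rfl, hrj, hj2⟩ := hj
      have hroot : IsSubPosRoot r j := ⟨hrj, by omega, hj2⟩
      set s := -(u r j) / (if j = negIdx r then 2 else 1)
      refine mem_rootSubmonoid_of_mul_rootElem hroot (s := s) (iht _ ?_ ?_ ?_)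
      · exact ZSpset.mul_mem hu (rootElem_mem_ZSpset hroot s)
      · exact hrows.mul_rootElem (by omega) (by omega) s
      · exact row_mul_rootElem_eq_zero (Zset.apply_self hu.1 r) (by simp; omega)
          fun y h1 h2 => hrow y h1 (by omega)
    · refine iht u hu hrows fun y h1 h2 => ?_
      rcases lt_or_eq_of_le h2 with h2 | h2
      · exact hrow y h1 (by omega)
      have hy : (idxVal y).natAbs = 1 := by
        have := idxVal_ne_zero y
        by_contra hy
        exact hj ⟨y, h2, h1, by omega⟩
      rw [hu.2 r y (Or.inr hy), if_neg (fun e => by subst e; omega)]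

lemma ZSpset_subset_rootSubmonoid : ∀ u ∈ ZSpset n, u ∈ rootSubmonoid n := by
  have key : ∀ m, 1 ≤ m → ∀ u ∈ ZSpset n, IdRowsFrom u m → u ∈ rootSubmonoid n := by
    intro m hm
    induction m, hm using Nat.le_induction with
    | base =>
      intro u hu h
      have h0 : IdRowsFrom u 0 := fun a _ y => by
        rcases Nat.eq_zero_or_pos a.1 with ha | ha
        · exact hu.2 _ y (Or.inl (by simp [ha]))
        · exact h a ha y
      rw [Zset.eq_one_of_idRowsFrom_zero hu.1 h0]
      exact Submonoid.one_mem _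
    | succ m hm ih =>
      by_cases hmn : m < n
      · exact mem_rootSubmonoid_of_idRowsFrom_succ hm hmn ih
      · exact fun u hu _ => ih u hu fun a _ => absurd a.2 (by omega)
  exact fun u hu => key (n + 1) (by omega) u hu fun a _ => absurd a.2 (by omega)

end Generation

lemma cols_eq_of_agree {n : ℕ} (hn : 0 < n) {z w : Matrix (Idx n) (Idx n) ℂ}
    (hz : z ∈ Zset n) (hw : w ∈ Zset n)
    (h : ∀ a : Fin n,
      (1 ≤ a.1 → z (Sum.inl a) (Sum.inl ⟨0, hn⟩) = w (Sum.inl a) (Sum.inl ⟨0, hn⟩)) ∧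
        z (Sum.inl a) (Sum.inr ⟨0, hn⟩) = w (Sum.inl a) (Sum.inr ⟨0, hn⟩)) :
    ∀ c, (idxVal c).natAbs = 1 → ∀ x, z x c = w x c := by
  intro c hc
  refine Zset.col_eq_of_apply_lt_eq hz hw fun x hx => ?_
  rcases c with c | c <;> obtain rfl : c = ⟨0, hn⟩ := Fin.ext (by simp at hc ⊢; omega) <;>
    rcases x with a | a
  · exact (h a).1 (by simp at hx; omega)
  · simp at hx; omega
  · exact (h a).2
  · simp at hx; omega

/-- Zhelobenko's lemma: for a (polynomial) vector `f` in the realization of an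
irreducible `sp(2n)`-module on functions on `Z`, the following are equivalent:
`f` is an `sp(2n-2)`-highest vector (i.e. invariant under the one-parameter subgroups
generated by the positive root vectors `F_{i,j}` of `sp(2n-2)`);
`f` is invariant under right translation by `Z_{Sp(2n-2)}`;
`f` depends only on the variables `z_{-n,-1},...,z_{-2,-1},z_{-n,1},...,z_{-1,1}`. -/
theorem stmt11 (n : ℕ) (hn : 2 ≤ n)
    (f : Matrix (Idx n) (Idx n) ℂ → ℂ) :
    ((∀ i j : Idx n, idxVal i < idxVal j →
        2 ≤ (idxVal i).natAbs → 2 ≤ (idxVal j).natAbs →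
        ∀ s : ℂ, ∀ z ∈ Zset n,
          f (z * NormedSpace.exp (s • Fmat i j)) = f z)
      ↔ (∀ u ∈ ZSpset n, ∀ z ∈ Zset n, f (z * u) = f z)) ∧
    ((∀ u ∈ ZSpset n, ∀ z ∈ Zset n, f (z * u) = f z)
      ↔ (∀ z ∈ Zset n, ∀ w ∈ Zset n,
          (∀ a : Fin n,
            (1 ≤ a.1 → z (Sum.inl a) (Sum.inl ⟨0, by omega⟩)
              = w (Sum.inl a) (Sum.inl ⟨0, by omega⟩)) ∧
            z (Sum.inl a) (Sum.inr ⟨0, by omega⟩)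
              = w (Sum.inl a) (Sum.inr ⟨0, by omega⟩)) →
          f z = f w)) := by
  have hexp : ∀ i j : Idx n, idxVal i < idxVal j → ∀ s,
      NormedSpace.exp (s • Fmat i j) = rootElem i j s :=
    fun i j hij => exp_smul_Fmat (fun e => by simp [e] at hij)
  refine ⟨⟨fun hA u hu z hz => ?_, fun hB i j hij hi hj s z hz => ?_⟩,
    ⟨fun hB z hz w hw hzw => ?_, fun hC u hu z hz => ?_⟩⟩
  · refine apply_mul_eq_of_mem_rootSubmonoid (fun i j h s z hz => ?_) u
      (ZSpset_subset_rootSubmonoid u hu) z hz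
    rw [← hexp i j h.1]
    exact hA i j h.1 h.2.1 h.2.2 s z hz
  · rw [hexp i j hij]
    exact hB _ (rootElem_mem_ZSpset ⟨hij, hi, hj⟩ s) z hz
  · obtain ⟨u, hu, rfl⟩ :=
      Zset.exists_ZSpset_mul_eq hz hw (cols_eq_of_agree (by omega) hz hw hzw)
    exact (hB u hu z hz).symm
  · exact hC _ (Zset.mul_mem hz hu.1) z hz fun a =>
      ⟨fun _ => ZSpset.mul_apply_col hu (by simp) _, ZSpset.mul_apply_col hu (by simp) _⟩
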